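/- Let Z_r ∈ ℝ^{D×N_r}, Z_u ∈ ℝ^{D×N_u}, Z_a = [Z_r Z_u], y_a = [y_r; y_u], and w_init ∈ ℝᴰ. Assume K_rr = Z_rᵀ Z_r is invertible and M := (K_uu − K_ur K_rr⁻¹ K_ru)⁻¹ exists, where K_ru = Z_rᵀ Z_u, K_ur = Z_uᵀ Z_r, K_uu = Z_uᵀ Z_u. Define w_p = w_init + Z_a (Z_aᵀ Z_a)⁻¹ (y_a − Z_aᵀ w_init) and w_r = w_init + Z_r K_rr⁻¹ (y_r − Z_rᵀ w_init), and let Π_r = Z_r K_rr⁻¹ Z_rᵀ. Then w_r − w_p = (I_D − Π_r) Z_u M ( K_ur K_rr⁻¹ (y_r − Z_rᵀ w_init) + Z_uᵀ w_init − y_u ). -/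

import Mathlib

open Matrix

/-!
Both models are `w₀ + Z (ZᵀZ)⁻¹ (y − Zᵀw₀)`. Since the Gram matrix of `Z_a = [Z_r Z_u]` is the
block matrix of the `K`'s, its inverse is given by the Schur complement formula with
`M = (K_uu − K_ur K_rr⁻¹ K_ru)⁻¹`; multiplying out shows
`Z_a (Z_aᵀ Z_a)⁻¹ = [Z_r K_rr⁻¹ − X K_ur K_rr⁻¹,  X]` with `X = (I − Π_r) Z_u M`,
and the difference of the two models is read off directly.
-/

namespace Matrix

variable {R d n₁ n₂ : Type*}

theorem transpose_fromCols_mul_fromCols [Fintype d] [Semiring R]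
    (A : Matrix d n₁ R) (B : Matrix d n₂ R) :
    (fromCols A B)ᵀ * fromCols A B = fromBlocks (Aᵀ * A) (Aᵀ * B) (Bᵀ * A) (Bᵀ * B) := by
  rw [transpose_fromCols, fromRows_mul_fromCols]

variable [CommRing R] [Fintype n₁] [DecidableEq n₁] [Fintype n₂] [DecidableEq n₂]

theorem inv_fromBlocks_of_isUnit₁₁ {A : Matrix n₁ n₁ R} (B : Matrix n₁ n₂ R) (C : Matrix n₂ n₁ R)
    {D : Matrix n₂ n₂ R} (hA : IsUnit A) (hS : IsUnit (D - C * A⁻¹ * B)) :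
    (fromBlocks A B C D)⁻¹ =
      fromBlocks (A⁻¹ + A⁻¹ * B * (D - C * A⁻¹ * B)⁻¹ * C * A⁻¹) (-(A⁻¹ * B * (D - C * A⁻¹ * B)⁻¹))
        (-((D - C * A⁻¹ * B)⁻¹ * C * A⁻¹)) (D - C * A⁻¹ * B)⁻¹ := by
  let := hA.invertible
  rw [← invOf_eq_nonsing_inv A] at hS ⊢
  let := hS.invertible
  let := fromBlocks₁₁Invertible A B C D
  rw [← invOf_eq_nonsing_inv, invOf_fromBlocks₁₁_eq]
  simp only [invOf_eq_nonsing_inv]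

variable [Fintype d] [DecidableEq d]

theorem fromCols_mul_inv_gram (Zr : Matrix d n₁ R) (Zu : Matrix d n₂ R)
    (hrr : IsUnit (Zrᵀ * Zr))
    (hS : IsUnit (Zuᵀ * Zu - Zuᵀ * Zr * (Zrᵀ * Zr)⁻¹ * (Zrᵀ * Zu))) :
    fromCols Zr Zu * ((fromCols Zr Zu)ᵀ * fromCols Zr Zu)⁻¹ =
      fromCols
        (Zr * (Zrᵀ * Zr)⁻¹ - (1 - Zr * (Zrᵀ * Zr)⁻¹ * Zrᵀ) * Zu *
          (Zuᵀ * Zu - Zuᵀ * Zr * (Zrᵀ * Zr)⁻¹ * (Zrᵀ * Zu))⁻¹ * (Zuᵀ * Zr) * (Zrᵀ * Zr)⁻¹)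
        ((1 - Zr * (Zrᵀ * Zr)⁻¹ * Zrᵀ) * Zu *
          (Zuᵀ * Zu - Zuᵀ * Zr * (Zrᵀ * Zr)⁻¹ * (Zrᵀ * Zu))⁻¹) := by
  rw [transpose_fromCols_mul_fromCols, inv_fromBlocks_of_isUnit₁₁ _ _ hrr hS,
    fromCols_mul_fromBlocks]
  congr 1 <;>
    simp only [Matrix.mul_add, Matrix.sub_mul, Matrix.mul_neg, Matrix.one_mul, Matrix.mul_assoc] <;>
    abel

end Matrix

/-- Over `ℝ`, with `Zᵀ * Z` invertible, the interpolant of `Zᵀ *ᵥ w = y` closest to `w₀`. -/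
noncomputable def minNormInterpolant {R d n : Type*} [CommRing R] [Fintype d] [Fintype n]
    [DecidableEq n] (Z : Matrix d n R) (y : n → R) (w₀ : d → R) : d → R :=
  w₀ + Z *ᵥ ((Zᵀ * Z)⁻¹ *ᵥ (y - Zᵀ *ᵥ w₀))

theorem minNormInterpolant_sub_minNormInterpolant_fromCols {R d n₁ n₂ : Type*} [CommRing R]
    [Fintype d] [DecidableEq d] [Fintype n₁] [DecidableEq n₁] [Fintype n₂] [DecidableEq n₂]
    (Zr : Matrix d n₁ R) (Zu : Matrix d n₂ R) (hrr : IsUnit (Zrᵀ * Zr))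
    (hS : IsUnit (Zuᵀ * Zu - Zuᵀ * Zr * (Zrᵀ * Zr)⁻¹ * (Zrᵀ * Zu)))
    (yr : n₁ → R) (yu : n₂ → R) (w₀ : d → R) :
    minNormInterpolant Zr yr w₀ - minNormInterpolant (fromCols Zr Zu) (Sum.elim yr yu) w₀ =
      ((1 - Zr * (Zrᵀ * Zr)⁻¹ * Zrᵀ) * Zu *
          (Zuᵀ * Zu - Zuᵀ * Zr * (Zrᵀ * Zr)⁻¹ * (Zrᵀ * Zu))⁻¹) *ᵥ
        ((Zuᵀ * Zr) *ᵥ ((Zrᵀ * Zr)⁻¹ *ᵥ (yr - Zrᵀ *ᵥ w₀)) + Zuᵀ *ᵥ w₀ - yu) := by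
  have hres : Sum.elim yr yu - (fromCols Zr Zu)ᵀ *ᵥ w₀ =
      Sum.elim (yr - Zrᵀ *ᵥ w₀) (yu - Zuᵀ *ᵥ w₀) := by
    rw [transpose_fromCols, fromRows_mulVec]
    ext (_ | _) <;> rfl
  unfold minNormInterpolant
  rw [hres, mulVec_mulVec _ (fromCols Zr Zu), fromCols_mul_inv_gram Zr Zu hrr hS,
    fromCols_mulVec_sumElim]
  simp only [sub_mulVec, mulVec_add, mulVec_sub, ← mulVec_mulVec]
  abel

/-- Lemma 3, first identity: with `w_p` the minimum-norm interpolant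
of all data and `w_r` that of the remaining data, and `Π_r = Z_r K_rr⁻¹ Z_rᵀ`,
`w_r − w_p = (I − Π_r) Z_u M (K_ur K_rr⁻¹ (y_r − Z_rᵀ w_init) + Z_uᵀ w_init − y_u)`. -/
theorem retrain_minus_pretrain {D Nr Nu : ℕ}
    (Zr : Matrix (Fin D) (Fin Nr) ℝ) (Zu : Matrix (Fin D) (Fin Nu) ℝ)
    (yr : Fin Nr → ℝ) (yu : Fin Nu → ℝ) (winit : Fin D → ℝ)
    (Za : Matrix (Fin D) (Fin Nr ⊕ Fin Nu) ℝ) (hZa : Za = Matrix.fromCols Zr Zu)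
    (ya : Fin Nr ⊕ Fin Nu → ℝ) (hya : ya = Sum.elim yr yu)
    (Krr : Matrix (Fin Nr) (Fin Nr) ℝ) (hKrr : Krr = Zrᵀ * Zr)
    (Kru : Matrix (Fin Nr) (Fin Nu) ℝ) (hKru : Kru = Zrᵀ * Zu)
    (Kur : Matrix (Fin Nu) (Fin Nr) ℝ) (hKur : Kur = Zuᵀ * Zr)
    (Kuu : Matrix (Fin Nu) (Fin Nu) ℝ) (hKuu : Kuu = Zuᵀ * Zu)
    (hrr : IsUnit Krr) (hS : IsUnit (Kuu - Kur * Krr⁻¹ * Kru))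
    (M : Matrix (Fin Nu) (Fin Nu) ℝ) (hM : M = (Kuu - Kur * Krr⁻¹ * Kru)⁻¹)
    (Pr : Matrix (Fin D) (Fin D) ℝ) (hPr : Pr = Zr * Krr⁻¹ * Zrᵀ)
    (wp : Fin D → ℝ)
    (hwp : wp = winit + Za *ᵥ ((Zaᵀ * Za)⁻¹ *ᵥ (ya - Zaᵀ *ᵥ winit)))
    (wr : Fin D → ℝ)
    (hwr : wr = winit + Zr *ᵥ (Krr⁻¹ *ᵥ (yr - Zrᵀ *ᵥ winit))) :
    wr - wp =
      ((1 - Pr) * Zu * M) *ᵥ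
        (Kur *ᵥ (Krr⁻¹ *ᵥ (yr - Zrᵀ *ᵥ winit)) + Zuᵀ *ᵥ winit - yu) := by
  subst hZa hya hKrr hKru hKur hKuu hM hPr hwp hwr
  exact minNormInterpolant_sub_minNormInterpolant_fromCols Zr Zu hrr hS yr yu winit
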